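/- arXiv:2102.06075 — 3 statements merged into one kernel-verified Lean document; each statement's English description precedes it below -/
import Mathlib

section
/- If X and Z are comonotonic integrable random variables, then the quantile function of X + Z is the sum of the quantile functions of X and Z: Q_{X+Z}(u) = Q_X(u) + Q_Z(u) for almost every u in (0,1). -/
/-! On the event where both comonotonicity identities hold, `X + Z = h ∘ U` with
`h = Q_X + Q_Z`, which is monotone on `(0,1)`, so the law of `X + Z` is the image of the uniform
law under `h`. The upper quantile of that image at `t` is the right limit `inf h '' (t,1)`, and a
monotone function is right-continuous outside a countable, hence Lebesgue-null, set. -/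

open MeasureTheory

/-- The (upper) quantile function of a distribution on ℝ. -/
noncomputable def quantile (ν : Measure ℝ) (t : ℝ) : ℝ :=
  sInf {x : ℝ | ν (Set.Iic x) > ENNReal.ofReal t}

/-- The uniform distribution on (0,1). -/
noncomputable def uniform01 : Measure ℝ := volume.restrict (Set.Ioo 0 1)

open Set Filter Topology ProbabilityTheory

theorem MonotoneOn.ae_csInf_image_Ioo_eq {β : Type*} [ConditionallyCompleteLinearOrder β]
    [TopologicalSpace β] [OrderTopology β] [SecondCountableTopology β]
    {μ : Measure ℝ} [NullSingletonClass μ] {f : ℝ → β} {a b : ℝ}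
    (hf : MonotoneOn f (Ioo a b)) :
    ∀ᵐ u ∂μ.restrict (Ioo a b), sInf (f '' Ioo u b) = f u := by
  filter_upwards [ae_restrict_mem measurableSet_Ioo,
    ae_restrict_of_ae (hf.countable_not_continuousWithinAt_Ioi.ae_notMem μ)] with u hu hcont
  have hright : ContinuousWithinAt f (Ioi u) u := by
    simp only [not_and, not_not] at hcont
    exact (continuousWithinAt_inter (Ioo_mem_nhds hu.1 hu.2)).1 (inter_comm _ _ ▸ hcont hu)
  have hbdd : BddBelow (f '' Ioo u b) := ⟨f u, by
    rintro _ ⟨v, hv, rfl⟩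
    exact hf hu ⟨hu.1.trans hv.1, hv.2⟩ hv.1.le⟩
  have hlim := (hf.mono (Ioo_subset_Ioo_left hu.1.le)).tendsto_nhdsWithin_Ioo_right
    (nonempty_Ioo.2 hu.2) hbdd
  exact tendsto_nhds_unique hlim hright.tendsto

section quantile

variable {ν : Measure ℝ} [IsProbabilityMeasure ν] {t : ℝ}

lemma nonempty_setOf_ofReal_lt_measure_Iic (ht : t < 1) :
    {x : ℝ | ν (Iic x) > ENNReal.ofReal t}.Nonempty := by
  have hlim := tendsto_measure_Iic_atTop ν
  rw [measure_univ] at hlim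
  exact (hlim.eventually (eventually_gt_nhds (ENNReal.ofReal_lt_one.2 ht))).exists

lemma bddBelow_setOf_ofReal_lt_measure_Iic (ht : 0 < t) :
    BddBelow {x : ℝ | ν (Iic x) > ENNReal.ofReal t} := by
  obtain ⟨x₀, hx₀⟩ := ((tendsto_cdf_atBot ν).eventually (eventually_lt_nhds ht)).exists
  refine ⟨x₀, fun y hy => le_of_not_gt fun hyx => ?_⟩
  rw [mem_ofPred_eq, ← ofReal_cdf, gt_iff_lt, ENNReal.ofReal_lt_ofReal_iff'] at hy
  exact ((cdf ν).mono hyx.le).not_gt (hx₀.trans hy.1)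

lemma monotoneOn_quantile : MonotoneOn (quantile ν) (Ioo 0 1) := fun _ ha _ hb hab =>
  csInf_le_csInf (bddBelow_setOf_ofReal_lt_measure_Iic ha.1)
    (nonempty_setOf_ofReal_lt_measure_Iic hb.2)
    fun _ hx => (ENNReal.ofReal_le_ofReal hab).trans_lt hx

end quantile

section uniform01

variable {h : ℝ → ℝ} {t : ℝ}

lemma ofReal_lt_uniform01_map_Iic_iff (hh : MonotoneOn h (Ioo 0 1)) (ht : 0 ≤ t) (x : ℝ) :
    ENNReal.ofReal t < uniform01.map h (Iic x) ↔ ∃ u ∈ Ioo t 1, h u ≤ x := by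
  rw [uniform01, Measure.map_apply_of_aemeasurable
      (aemeasurable_restrict_of_monotoneOn measurableSet_Ioo hh) measurableSet_Iic,
    Measure.restrict_apply' measurableSet_Ioo]
  constructor
  · intro hx
    by_contra! hgt
    have hsub : h ⁻¹' Iic x ∩ Ioo 0 1 ⊆ Ioc 0 t := fun v ⟨hvx, hv⟩ =>
      ⟨hv.1, le_of_not_gt fun htv => (hgt v ⟨htv, hv.2⟩).not_ge hvx⟩
    refine hx.not_ge ?_
    calc volume (h ⁻¹' Iic x ∩ Ioo 0 1) ≤ volume (Ioc 0 t) := measure_mono hsub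
      _ = ENNReal.ofReal t := by rw [Real.volume_Ioc, sub_zero]
  · rintro ⟨u, hu, hux⟩
    have hu₀ : 0 < u := ht.trans_lt hu.1
    have hsub : Ioo 0 u ⊆ h ⁻¹' Iic x ∩ Ioo 0 1 := fun v hv =>
      ⟨(hh ⟨hv.1, hv.2.trans hu.2⟩ ⟨hu₀, hu.2⟩ hv.2.le).trans hux, hv.1, hv.2.trans hu.2⟩
    calc ENNReal.ofReal t < ENNReal.ofReal u := (ENNReal.ofReal_lt_ofReal_iff hu₀).2 hu.1
      _ = volume (Ioo 0 u) := by rw [Real.volume_Ioo, sub_zero]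
      _ ≤ volume (h ⁻¹' Iic x ∩ Ioo 0 1) := measure_mono hsub

lemma quantile_uniform01_map (hh : MonotoneOn h (Ioo 0 1)) (ht : 0 ≤ t) :
    quantile (uniform01.map h) t = sInf (h '' Ioo t 1) := by
  refine csInf_eq_csInf_of_forall_exists_le ?_ ?_
  · intro x hx
    obtain ⟨u, hu, hux⟩ := (ofReal_lt_uniform01_map_Iic_iff hh ht x).1 hx
    exact ⟨h u, mem_image_of_mem h hu, hux⟩
  · rintro _ ⟨u, hu, rfl⟩
    exact ⟨h u, (ofReal_lt_uniform01_map_Iic_iff hh ht _).2 ⟨u, hu, le_rfl⟩, le_rfl⟩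

end uniform01

theorem stmt_7_general {Ω : Type*} [MeasurableSpace Ω] (P : Measure Ω) [IsProbabilityMeasure P]
    (X Z U : Ω → ℝ) (hX : Measurable X) (hZ : Measurable Z) (hU : Measurable U)
    (hUlaw : P.map U = uniform01)
    (hXcom : ∀ᵐ ω ∂P, X ω = quantile (P.map X) (U ω))
    (hZcom : ∀ᵐ ω ∂P, Z ω = quantile (P.map Z) (U ω)) :
    ∀ᵐ u ∂uniform01,
      quantile (P.map (fun ω => X ω + Z ω)) u
        = quantile (P.map X) u + quantile (P.map Z) u := by
  have : IsProbabilityMeasure (P.map X) := Measure.isProbabilityMeasure_map hX.aemeasurable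
  have : IsProbabilityMeasure (P.map Z) := Measure.isProbabilityMeasure_map hZ.aemeasurable
  set h : ℝ → ℝ := fun t => quantile (P.map X) t + quantile (P.map Z) t
  have hh : MonotoneOn h (Ioo 0 1) := monotoneOn_quantile.add monotoneOn_quantile
  have hsum : (fun ω => X ω + Z ω) =ᵐ[P] h ∘ U := by
    filter_upwards [hXcom, hZcom] with ω hXω hZω
    rw [Function.comp_apply, hXω, hZω]
  have hlaw : P.map (fun ω => X ω + Z ω) = uniform01.map h := by
    rw [Measure.map_congr hsum, ← AEMeasurable.map_map_of_aemeasurable _ hU.aemeasurable, hUlaw]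
    exact hUlaw ▸ aemeasurable_restrict_of_monotoneOn measurableSet_Ioo hh
  filter_upwards [ae_restrict_mem measurableSet_Ioo, hh.ae_csInf_image_Ioo_eq] with u hu hright
  rw [hlaw, quantile_uniform01_map hh hu.1.le, hright]

/-- if X and Z are comonotonic integrable random variables
(X = Q_X(U), Z = Q_Z(U) a.s. for a common uniform U on (0,1)), then the
quantile function of X + Z equals Q_X + Q_Z for almost every u ∈ (0,1). -/
theorem stmt_7 {Ω : Type*} [MeasurableSpace Ω] (P : Measure Ω) [IsProbabilityMeasure P]
    (X Z U : Ω → ℝ) (hX : Measurable X) (hZ : Measurable Z) (hU : Measurable U)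
    (hXi : Integrable X P) (hZi : Integrable Z P)
    (hUlaw : P.map U = uniform01)
    (hXcom : ∀ᵐ ω ∂P, X ω = quantile (P.map X) (U ω))
    (hZcom : ∀ᵐ ω ∂P, Z ω = quantile (P.map Z) (U ω)) :
    ∀ᵐ u ∂uniform01,
      quantile (P.map (fun ω => X ω + Z ω)) u
        = quantile (P.map X) u + quantile (P.map Z) u :=
  stmt_7_general P X Z U hX hZ hU hUlaw hXcom hZcom
end

section
/- If X and Z are μ-comonotonic, with X = ∇V_X(U) and Z = ∇V_Z(U) for a common U distributed as μ and V_X, V_Z convex, then the μ-quantile of X + Z is ∇V_X + ∇V_Z, i.e., (∇(V_X+V_Z))_#μ = law(X+Z) and ∇(V_X+V_Z) is the gradient of a convex function. -/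
open MeasureTheory InnerProductSpace

section Gradient

variable {𝕜 F : Type*} [RCLike 𝕜] [NormedAddCommGroup F] [InnerProductSpace 𝕜 F]
  [CompleteSpace F] {f g : F → 𝕜} {f' g' x : F}

theorem HasGradientAt.fun_add (hf : HasGradientAt f f' x) (hg : HasGradientAt g g' x) :
    HasGradientAt (fun y => f y + g y) (f' + g') x := by
  rw [hasGradientAt_iff_hasFDerivAt, map_add]
  exact hf.hasFDerivAt.add hg.hasFDerivAt

theorem gradient_fun_add (hf : DifferentiableAt 𝕜 f x) (hg : DifferentiableAt 𝕜 g x) :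
    gradient (fun y => f y + g y) x = gradient f x + gradient g x :=
  (hf.hasGradientAt.fun_add hg.hasGradientAt).gradient

theorem measurable_gradient [MeasurableSpace F] [BorelSpace F] :
    Measurable (gradient f) :=
  (toDual 𝕜 F).symm.continuous.measurable.comp (measurable_fderiv 𝕜 f)

end Gradient

theorem stmt_14_general {d : ℕ} {Ω : Type*} [MeasurableSpace Ω]
    (P : Measure Ω)
    (μ : Measure (EuclideanSpace ℝ (Fin d)))
    (VX VZ : EuclideanSpace ℝ (Fin d) → ℝ)
    (hVX : ConvexOn ℝ Set.univ VX) (hVZ : ConvexOn ℝ Set.univ VZ)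
    (hVXd : Differentiable ℝ VX) (hVZd : Differentiable ℝ VZ)
    (U : Ω → EuclideanSpace ℝ (Fin d)) (hU : Measurable U) (hUlaw : P.map U = μ)
    (X Z : Ω → EuclideanSpace ℝ (Fin d))
    (hX : X = fun ω => gradient VX (U ω)) (hZ : Z = fun ω => gradient VZ (U ω)) :
    ConvexOn ℝ Set.univ (fun x => VX x + VZ x) ∧
    (∀ u, gradient (fun x => VX x + VZ x) u = gradient VX u + gradient VZ u) ∧
    μ.map (fun u => gradient (fun x => VX x + VZ x) u)
      = P.map (fun ω => X ω + Z ω) := by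
  have hgrad : gradient (fun x => VX x + VZ x) = gradient VX + gradient VZ :=
    funext fun u => gradient_fun_add (hVXd u) (hVZd u)
  refine ⟨hVX.add hVZ, congrFun hgrad, ?_⟩
  subst hX hZ hUlaw
  rw [hgrad, Measure.map_map (measurable_gradient.add measurable_gradient) hU]
  rfl

/-- if X = ∇V_X(U) and Z = ∇V_Z(U) for a common U =_d μ with V_X, V_Z
convex (μ-comonotonicity), then the μ-quantile of X + Z is ∇(V_X + V_Z): the function
V_X + V_Z is convex, ∇(V_X+V_Z) = ∇V_X + ∇V_Z, and ∇(V_X+V_Z) pushes μ forward to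
the law of X+Z. -/
theorem stmt_14 {d : ℕ} {Ω : Type*} [MeasurableSpace Ω]
    (P : Measure Ω) [IsProbabilityMeasure P]
    (μ : Measure (EuclideanSpace ℝ (Fin d))) [IsProbabilityMeasure μ]
    (hac : μ ≪ volume) (hμ2 : MemLp id 2 μ)
    (VX VZ : EuclideanSpace ℝ (Fin d) → ℝ)
    (hVX : ConvexOn ℝ Set.univ VX) (hVZ : ConvexOn ℝ Set.univ VZ)
    (hVXd : Differentiable ℝ VX) (hVZd : Differentiable ℝ VZ)
    (U : Ω → EuclideanSpace ℝ (Fin d)) (hU : Measurable U) (hUlaw : P.map U = μ)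
    (X Z : Ω → EuclideanSpace ℝ (Fin d))
    (hX : X = fun ω => gradient VX (U ω)) (hZ : Z = fun ω => gradient VZ (U ω)) :
    ConvexOn ℝ Set.univ (fun x => VX x + VZ x) ∧
    (∀ u, gradient (fun x => VX x + VZ x) u = gradient VX u + gradient VZ u) ∧
    μ.map (fun u => gradient (fun x => VX x + VZ x) u)
      = P.map (fun ω => X ω + Z ω) :=
  stmt_14_general P μ VX VZ hVX hVZ hVXd hVZd U hU hUlaw X Z hX hZ
end

section
/- For a multivariate rank dependent utility functional Φ(X) = E[Q_X(U)·φ(U)], if X and Z are μ-comonotonic then Φ(X + Z) = Φ(X) + Φ(Z). -/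
/-!
The sum `Q_X + Q_Z` of the two quantile maps is the gradient of the convex function `V_X + V_Z`,
and for comonotonic `X, Z` it sends `μ` to the law of `(Q_X + Q_Z)(U) = X + Z`. Gradients of
convex functions pushing `μ` to a given law are unique `μ`-a.e. (Brenier–McCann), so
`Q_{X+Z} = Q_X + Q_Z` `μ`-a.e. and `Φ` is additive because it is linear in the quantile map.
(Convex functions are locally Lipschitz, so by Rademacher's theorem their gradients exist
`μ`-a.e. when `μ ≪ volume`.)

Uniqueness: if `G` has the same law under `μ` as `∇W`, then by the Fenchel–Young inequality
`∫ ⟪u, G u⟫ ≤ ∫ (W*(G u) + W u) = ∫ (W*(∇W u) + W u) = ∫ ⟪u, ∇W u⟫`, with equality only if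
`G u` is a subgradient of `W` at `u` for a.e. `u`, i.e. `G = ∇W` a.e. When `G = ∇V` with `V`
convex, the same inequality with the roles of `V` and `W` exchanged forces equality.
-/

open MeasureTheory Filter Set
open scoped RealInnerProductSpace ENNReal

section Gradient

variable {E : Type*} [NormedAddCommGroup E] [NormedSpace ℝ E] {f : E → ℝ} {s : Set E} {u x : E}

lemma ConvexOn.add_apply_sub_le_of_hasFDerivAt {f' : E →L[ℝ] ℝ} (hf : ConvexOn ℝ s f)
    (hu : u ∈ s) (hx : x ∈ s) (hf' : HasFDerivAt f f' u) : f u + f' (x - u) ≤ f x := by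
  set l : ℝ →ᵃ[ℝ] E := AffineMap.lineMap u x
  have hline : ConvexOn ℝ (l ⁻¹' s) (f ∘ l) := hf.comp_affineMap l
  have hderiv : HasDerivAt (f ∘ l) (f' (x - u)) 0 := by
    have hf'0 : HasFDerivAt f f' (l 0) := by simpa [l] using hf'
    exact hf'0.comp_hasDerivAt 0 AffineMap.hasDerivAt_lineMap
  have h0 : l 0 = u := AffineMap.lineMap_apply_zero u x
  have h1 : l 1 = x := AffineMap.lineMap_apply_one u x
  have := hline.le_slope_of_hasDerivAt (by simpa [h0] using hu) (by simpa [h1] using hx)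
    zero_lt_one hderiv
  simp only [slope_def_field, Function.comp_apply, h0, h1, sub_zero, div_one] at this
  linarith

variable {F : Type*} [NormedAddCommGroup F] [InnerProductSpace ℝ F] [CompleteSpace F]
  {g : F → ℝ} {v y : F}

lemma ConvexOn.add_inner_gradient_le (hg : ConvexOn ℝ univ g) (hd : DifferentiableAt ℝ g v)
    (w : F) : g v + ⟪gradient g v, w - v⟫ ≤ g w := by
  simpa [InnerProductSpace.toDual_apply_apply] using
    hg.add_apply_sub_le_of_hasFDerivAt (mem_univ v) (mem_univ w)
      (hasGradientAt_iff_hasFDerivAt.mp hd.hasGradientAt)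

lemma gradient_add {h : F → ℝ} (hg : DifferentiableAt ℝ g v) (hh : DifferentiableAt ℝ h v) :
    gradient (g + h) v = gradient g v + gradient h v := by
  rw [gradient, fderiv_add hg hh, map_add, gradient, gradient]

lemma DifferentiableAt.eq_gradient_of_forall_add_inner_le (hd : DifferentiableAt ℝ g v)
    (h : ∀ w, g v + ⟪y, w - v⟫ ≤ g w) : y = gradient g v := by
  have hmin : IsLocalMin (fun w => g w - ⟪y, w⟫) v :=
    Eventually.of_forall fun w => by linarith [h w, inner_sub_right (𝕜 := ℝ) y w v]
  have := hmin.hasFDerivAt_eq_zero (hd.hasFDerivAt.sub (InnerProductSpace.toDual ℝ F y).hasFDerivAt)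
  rw [sub_eq_zero] at this
  rw [gradient, this, LinearIsometryEquiv.symm_apply_apply]

end Gradient

theorem LocallyLipschitz.ae_differentiableAt {E F : Type*} [NormedAddCommGroup E]
    [NormedSpace ℝ E] [FiniteDimensional ℝ E] [MeasurableSpace E] [BorelSpace E]
    [NormedAddCommGroup F] [NormedSpace ℝ F] [FiniteDimensional ℝ F]
    {μ : Measure E} [μ.IsAddHaarMeasure] {f : E → F} (hf : LocallyLipschitz f) :
    ∀ᵐ x ∂μ, DifferentiableAt ℝ f x := by
  have hball : ∀ n : ℕ, ∀ᵐ x ∂μ, x ∈ Metric.ball (0 : E) n → DifferentiableAt ℝ f x := by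
    intro n
    obtain ⟨K, hK⟩ := hf.locallyLipschitzOn.exists_lipschitzOnWith_of_compact
      (isCompact_closedBall (0 : E) n)
    filter_upwards [(hK.mono Metric.ball_subset_closedBall).ae_differentiableWithinAt_of_mem]
      with x hx hxn
    exact (hx hxn).differentiableAt (Metric.isOpen_ball.mem_nhds hxn)
  filter_upwards [ae_all_iff.mpr hball] with x hx
  obtain ⟨n, hn⟩ := exists_nat_gt ‖x‖
  exact hx n (mem_ball_zero_iff.mpr hn)

theorem MeasureTheory.MemLp.integrable_inner {α F : Type*} [MeasurableSpace α] {μ : Measure α}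
    [NormedAddCommGroup F] [InnerProductSpace ℝ F] {f g : α → F}
    (hf : MemLp f 2 μ) (hg : MemLp g 2 μ) : Integrable (fun x => ⟪f x, g x⟫) μ :=
  (L2.integrable_inner (hf.toLp f) (hg.toLp g)).congr <| by
    filter_upwards [hf.coeFn_toLp, hg.coeFn_toLp] with x hfx hgx
    rw [hfx, hgx]

section Conjugate

variable {E : Type*} [NormedAddCommGroup E] [InnerProductSpace ℝ E] {W : E → ℝ} {u y : E}

/-- The Fenchel conjugate `W*` of `W`, shifted to `W* + W 0`: the shift makes it nonnegative
(take `x = 0`), so that it can be valued in `ℝ≥0∞` and integrated without integrability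
conditions. -/
noncomputable def shiftedConjugate (W : E → ℝ) (y : E) : ℝ≥0∞ :=
  ⨆ x, ENNReal.ofReal (⟪x, y⟫ - W x + W 0)

lemma ofReal_le_shiftedConjugate (W : E → ℝ) (x y : E) :
    ENNReal.ofReal (⟪x, y⟫ - W x + W 0) ≤ shiftedConjugate W y :=
  le_iSup (fun x => ENNReal.ofReal (⟪x, y⟫ - W x + W 0)) x

lemma le_toReal_shiftedConjugate (hy : shiftedConjugate W y ≠ ⊤) (x : E) :
    ⟪x, y⟫ - W x + W 0 ≤ (shiftedConjugate W y).toReal :=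
  (ENNReal.ofReal_le_iff_le_toReal hy).mp (ofReal_le_shiftedConjugate W x y)

lemma lowerSemicontinuous_shiftedConjugate (W : E → ℝ) :
    LowerSemicontinuous (shiftedConjugate W) :=
  lowerSemicontinuous_iSup fun _ => (ENNReal.continuous_ofReal.comp
    ((continuous_const.inner continuous_id).sub continuous_const |>.add
      continuous_const)).lowerSemicontinuous

variable [CompleteSpace E]

lemma ConvexOn.shiftedConjugate_gradient (hW : ConvexOn ℝ univ W) (hd : DifferentiableAt ℝ W u) :
    shiftedConjugate W (gradient W u) = ENNReal.ofReal (⟪u, gradient W u⟫ - W u + W 0) := by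
  refine le_antisymm (iSup_le fun x => ENNReal.ofReal_le_ofReal ?_)
    (ofReal_le_shiftedConjugate W u _)
  have := hW.add_inner_gradient_le hd x
  rw [inner_sub_right, real_inner_comm x, real_inner_comm u] at this
  linarith

lemma ConvexOn.toReal_shiftedConjugate_gradient (hW : ConvexOn ℝ univ W)
    (hd : DifferentiableAt ℝ W u) :
    (shiftedConjugate W (gradient W u)).toReal = ⟪u, gradient W u⟫ - W u + W 0 := by
  have := hW.add_inner_gradient_le hd 0
  rw [zero_sub, inner_neg_right, real_inner_comm] at this
  rw [hW.shiftedConjugate_gradient hd, ENNReal.toReal_ofReal (by linarith)]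

lemma DifferentiableAt.eq_gradient_of_toReal_shiftedConjugate_le (hd : DifferentiableAt ℝ W u)
    (hy : shiftedConjugate W y ≠ ⊤)
    (hle : (shiftedConjugate W y).toReal ≤ ⟪u, y⟫ - W u + W 0) : y = gradient W u :=
  hd.eq_gradient_of_forall_add_inner_le fun x => by
    have := le_toReal_shiftedConjugate hy x
    rw [inner_sub_right, real_inner_comm x, real_inner_comm u]
    linarith

end Conjugate

section Brenier

variable {E : Type*} [NormedAddCommGroup E] [InnerProductSpace ℝ E] [CompleteSpace E]
  [MeasurableSpace E] [BorelSpace E] {μ : Measure E} {W : E → ℝ} {G H : E → E}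

theorem measurable_gradient_s17 (f : E → ℝ) : Measurable (gradient f) :=
  (InnerProductSpace.toDual ℝ E).symm.continuous.measurable.comp (measurable_fderiv ℝ f)

lemma ConvexOn.integrable_of_integrable_inner_gradient [FiniteDimensional ℝ E]
    [IsFiniteMeasure μ] (hW : ConvexOn ℝ univ W)
    (hWd : ∀ᵐ u ∂μ, DifferentiableAt ℝ W u) (hμ : Integrable id μ)
    (hi : Integrable (fun u => ⟪u, gradient W u⟫) μ) : Integrable W μ := by
  rcases eq_zero_or_neZero μ with rfl | _
  · exact integrable_zero_measure
  obtain ⟨u₁, hu₁⟩ := hWd.exists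
  -- `W` lies above its tangent plane at `u₁` and below `W 0 + ⟪u, ∇W u⟫` (tangent plane at `u`).
  refine integrable_of_le_of_le hW.locallyLipschitz.continuous.aestronglyMeasurable
    (ae_of_all _ (hW.add_inner_gradient_le hu₁)) ?_
    ((integrable_const _).add ((hμ.sub (integrable_const u₁)).const_inner _))
    ((integrable_const (W 0)).add hi)
  filter_upwards [hWd] with u hu
  have := hW.add_inner_gradient_le hu 0
  rw [zero_sub, inner_neg_right, real_inner_comm] at this
  show W u ≤ W 0 + ⟪u, gradient W u⟫
  linarith

lemma lintegral_shiftedConjugate_comp_of_map_eq (hW : ConvexOn ℝ univ W)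
    (hWd : ∀ᵐ u ∂μ, DifferentiableAt ℝ W u) (hG : AEMeasurable G μ)
    (hH : ∀ᵐ u ∂μ, H u = gradient W u) (hmap : μ.map G = μ.map H) :
    ∫⁻ u, shiftedConjugate W (G u) ∂μ = ∫⁻ u, ENNReal.ofReal (⟪u, H u⟫ - W u + W 0) ∂μ := by
  have hm := (lowerSemicontinuous_shiftedConjugate W).measurable
  have hHm : AEMeasurable H μ :=
    (measurable_gradient_s17 W).aemeasurable.congr (hH.mono fun _ h => h.symm)
  rw [← lintegral_map' hm.aemeasurable hG, hmap, lintegral_map' hm.aemeasurable hHm]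
  refine lintegral_congr_ae ?_
  filter_upwards [hH, hWd] with u hu hdu
  rw [hu, hW.shiftedConjugate_gradient hdu]

lemma shiftedConjugate_comp_of_map_eq [IsFiniteMeasure μ] (hW : ConvexOn ℝ univ W)
    (hWd : ∀ᵐ u ∂μ, DifferentiableAt ℝ W u) (hWi : Integrable W μ)
    (hG : AEMeasurable G μ) (hGi : Integrable (fun u => ⟪u, G u⟫) μ)
    (hH : ∀ᵐ u ∂μ, H u = gradient W u) (hHi : Integrable (fun u => ⟪u, H u⟫) μ)
    (hmap : μ.map G = μ.map H) :
    (∀ᵐ u ∂μ, shiftedConjugate W (G u) ≠ ⊤) ∧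
      Integrable (fun u => (shiftedConjugate W (G u)).toReal) μ ∧
      ∫ u, (shiftedConjugate W (G u)).toReal ∂μ =
        ∫ u, ⟪u, G u⟫ - W u + W 0 ∂μ + (∫ u, ⟪u, H u⟫ ∂μ - ∫ u, ⟪u, G u⟫ ∂μ) := by
  have hai : Integrable (fun u => ⟪u, H u⟫ - W u + W 0) μ :=
    (hHi.sub hWi).add (integrable_const _)
  have hbi : Integrable (fun u => ⟪u, G u⟫ - W u + W 0) μ :=
    (hGi.sub hWi).add (integrable_const _)
  have ha0 : 0 ≤ᵐ[μ] fun u => ⟪u, H u⟫ - W u + W 0 := by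
    filter_upwards [hH, hWd] with u hu hdu
    rw [Pi.zero_apply, hu, ← hW.toReal_shiftedConjugate_gradient hdu]
    exact ENNReal.toReal_nonneg
  have hGm : AEMeasurable (fun u => shiftedConjugate W (G u)) μ :=
    (lowerSemicontinuous_shiftedConjugate W).measurable.comp_aemeasurable hG
  have hlint := lintegral_shiftedConjugate_comp_of_map_eq hW hWd hG hH hmap
  have hfin : ∫⁻ u, shiftedConjugate W (G u) ∂μ ≠ ⊤ := hlint ▸ hai.lintegral_lt_top.ne
  have hGfin := ae_lt_top' hGm hfin
  refine ⟨hGfin.mono fun _ h => h.ne, integrable_toReal_of_lintegral_ne_top hGm hfin, ?_⟩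
  have hab : ∫ u, ⟪u, H u⟫ - W u + W 0 ∂μ - ∫ u, ⟪u, G u⟫ - W u + W 0 ∂μ =
      ∫ u, ⟪u, H u⟫ ∂μ - ∫ u, ⟪u, G u⟫ ∂μ := by
    rw [← integral_sub hai hbi, ← integral_sub hHi hGi]
    congr 1 with u
    ring
  rw [integral_toReal hGm hGfin, hlint,
    ← integral_eq_lintegral_of_nonneg_ae ha0 hai.aestronglyMeasurable]
  linarith

theorem integral_inner_le_of_map_eq [IsFiniteMeasure μ] (hW : ConvexOn ℝ univ W)
    (hWd : ∀ᵐ u ∂μ, DifferentiableAt ℝ W u) (hWi : Integrable W μ)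
    (hG : AEMeasurable G μ) (hGi : Integrable (fun u => ⟪u, G u⟫) μ)
    (hH : ∀ᵐ u ∂μ, H u = gradient W u) (hHi : Integrable (fun u => ⟪u, H u⟫) μ)
    (hmap : μ.map G = μ.map H) :
    ∫ u, ⟪u, G u⟫ ∂μ ≤ ∫ u, ⟪u, H u⟫ ∂μ := by
  obtain ⟨hfin, hci, hc⟩ := shiftedConjugate_comp_of_map_eq hW hWd hWi hG hGi hH hHi hmap
  have hbi : Integrable (fun u => ⟪u, G u⟫ - W u + W 0) μ :=
    (hGi.sub hWi).add (integrable_const _)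
  linarith [integral_mono_ae hbi hci (hfin.mono fun u hu => le_toReal_shiftedConjugate hu u)]

theorem ae_eq_of_map_eq_of_integral_inner_le [IsFiniteMeasure μ] (hW : ConvexOn ℝ univ W)
    (hWd : ∀ᵐ u ∂μ, DifferentiableAt ℝ W u) (hWi : Integrable W μ)
    (hG : AEMeasurable G μ) (hGi : Integrable (fun u => ⟪u, G u⟫) μ)
    (hH : ∀ᵐ u ∂μ, H u = gradient W u) (hHi : Integrable (fun u => ⟪u, H u⟫) μ)
    (hmap : μ.map G = μ.map H) (hle : ∫ u, ⟪u, H u⟫ ∂μ ≤ ∫ u, ⟪u, G u⟫ ∂μ) :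
    G =ᵐ[μ] H := by
  obtain ⟨hfin, hci, hc⟩ := shiftedConjugate_comp_of_map_eq hW hWd hWi hG hGi hH hHi hmap
  have hbi : Integrable (fun u => ⟪u, G u⟫ - W u + W 0) μ :=
    (hGi.sub hWi).add (integrable_const _)
  have hFY : (fun u => ⟪u, G u⟫ - W u + W 0) ≤ᵐ[μ]
      fun u => (shiftedConjugate W (G u)).toReal :=
    hfin.mono fun u hu => le_toReal_shiftedConjugate hu u
  have heq : ∫ u, ⟪u, G u⟫ - W u + W 0 ∂μ = ∫ u, (shiftedConjugate W (G u)).toReal ∂μ := by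
    linarith [integral_mono_ae hbi hci hFY]
  filter_upwards [(integral_eq_iff_of_ae_le hbi hci hFY).mp heq, hfin, hH, hWd]
    with u hu hufin hHu hdu
  rw [hHu]
  exact hdu.eq_gradient_of_toReal_shiftedConjugate_le hufin hu.ge

theorem ae_eq_of_map_eq_of_ae_eq_gradient [FiniteDimensional ℝ E] [IsFiniteMeasure μ]
    {V : E → ℝ} (hV : ConvexOn ℝ univ V) (hW : ConvexOn ℝ univ W)
    (hVd : ∀ᵐ u ∂μ, DifferentiableAt ℝ V u) (hWd : ∀ᵐ u ∂μ, DifferentiableAt ℝ W u)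
    (hμ : MemLp id 2 μ) (hG2 : MemLp G 2 μ) (hH2 : MemLp H 2 μ)
    (hG : ∀ᵐ u ∂μ, G u = gradient V u) (hH : ∀ᵐ u ∂μ, H u = gradient W u)
    (hmap : μ.map G = μ.map H) : G =ᵐ[μ] H := by
  have hμ1 : Integrable id μ := hμ.integrable one_le_two
  have hGi : Integrable (fun u => ⟪u, G u⟫) μ := hμ.integrable_inner hG2
  have hHi : Integrable (fun u => ⟪u, H u⟫) μ := hμ.integrable_inner hH2
  have hVi : Integrable V μ := hV.integrable_of_integrable_inner_gradient hVd hμ1 <| hGi.congr <| by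
    filter_upwards [hG] with u hu
    rw [hu]
  have hWi : Integrable W μ := hW.integrable_of_integrable_inner_gradient hWd hμ1 <| hHi.congr <| by
    filter_upwards [hH] with u hu
    rw [hu]
  exact ae_eq_of_map_eq_of_integral_inner_le hW hWd hWi hG2.aemeasurable hGi hH hHi hmap
    (integral_inner_le_of_map_eq hV hVd hVi hH2.aemeasurable hHi hG hGi hmap.symm)

end Brenier

theorem MeasureTheory.MemLp.of_map_eq {α β F : Type*} [MeasurableSpace α] [MeasurableSpace β]
    [NormedAddCommGroup F] [MeasurableSpace F] [BorelSpace F] [SecondCountableTopology F]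
    {μ : Measure α} {P : Measure β} {Q : α → F} {X : β → F} {p : ℝ≥0∞}
    (hQ : AEMeasurable Q μ) (hX : MemLp X p P) (h : μ.map Q = P.map X) : MemLp Q p μ := by
  have hid : MemLp id p (P.map X) :=
    (memLp_map_measure_iff aestronglyMeasurable_id hX.aestronglyMeasurable.aemeasurable).mpr hX
  rw [← h] at hid
  exact (memLp_map_measure_iff aestronglyMeasurable_id hQ).mp hid

/-- for the multivariate rank dependent utility functional
Φ(X) = E[Q_X(U)·φ(U)] = ∫ ⟪Q_X(u), φ(u)⟫ dμ(u), if X and Z are μ-comonotonic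
(X = Q_X(U), Z = Q_Z(U) for a common U =_d μ), then Φ(X+Z) = Φ(X) + Φ(Z). -/
theorem stmt_17 {d : ℕ} {Ω : Type*} [MeasurableSpace Ω]
    (P : Measure Ω) [IsProbabilityMeasure P]
    (μ : Measure (EuclideanSpace ℝ (Fin d))) [IsProbabilityMeasure μ]
    (hac : μ ≪ volume) (hμ2 : MemLp id 2 μ)
    (U : Ω → EuclideanSpace ℝ (Fin d)) (hU : Measurable U) (hUlaw : P.map U = μ)
    (φv : EuclideanSpace ℝ (Fin d) → EuclideanSpace ℝ (Fin d)) (hφ : MemLp φv 2 μ)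
    (X Z : Ω → EuclideanSpace ℝ (Fin d))
    (hX2 : MemLp X 2 P) (hZ2 : MemLp Z 2 P)
    (QX QZ QXZ : EuclideanSpace ℝ (Fin d) → EuclideanSpace ℝ (Fin d))
    (VX VZ W : EuclideanSpace ℝ (Fin d) → ℝ)
    (hVX : ConvexOn ℝ Set.univ VX) (hVZ : ConvexOn ℝ Set.univ VZ)
    (hW : ConvexOn ℝ Set.univ W)
    (hQX : ∀ᵐ u ∂μ, QX u = gradient VX u) (hQZ : ∀ᵐ u ∂μ, QZ u = gradient VZ u)
    (hQXZ : ∀ᵐ u ∂μ, QXZ u = gradient W u)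
    (hpushX : μ.map QX = P.map X) (hpushZ : μ.map QZ = P.map Z)
    (hpushXZ : μ.map QXZ = P.map (fun ω => X ω + Z ω))
    (hXU : ∀ᵐ ω ∂P, X ω = QX (U ω)) (hZU : ∀ᵐ ω ∂P, Z ω = QZ (U ω)) :
    ∫ u, ⟪QXZ u, φv u⟫ ∂μ = ∫ u, ⟪QX u, φv u⟫ ∂μ + ∫ u, ⟪QZ u, φv u⟫ ∂μ := by
  have hdiff {f : EuclideanSpace ℝ (Fin d) → ℝ} (hf : ConvexOn ℝ univ f) :
      ∀ᵐ u ∂μ, DifferentiableAt ℝ f u :=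
    hac.ae_le hf.locallyLipschitz.ae_differentiableAt
  have hmeas {Q : EuclideanSpace ℝ (Fin d) → EuclideanSpace ℝ (Fin d)} {f}
      (hQ : ∀ᵐ u ∂μ, Q u = gradient f u) : AEMeasurable Q μ :=
    (measurable_gradient_s17 f).aemeasurable.congr (hQ.mono fun _ h => h.symm)
  have hQX2 : MemLp QX 2 μ := .of_map_eq (hmeas hQX) hX2 hpushX
  have hQZ2 : MemLp QZ 2 μ := .of_map_eq (hmeas hQZ) hZ2 hpushZ
  have hQXZ2 : MemLp QXZ 2 μ := .of_map_eq (hmeas hQXZ) (hX2.add hZ2) hpushXZ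
  have hsum : ∀ᵐ u ∂μ, (QX + QZ) u = gradient (VX + VZ) u := by
    filter_upwards [hQX, hQZ, hdiff hVX, hdiff hVZ] with u hXu hZu hdX hdZ
    rw [Pi.add_apply, hXu, hZu, gradient_add hdX hdZ]
  have hlaw : μ.map (QX + QZ) = μ.map QXZ := by
    have hXZ : (fun ω => X ω + Z ω) =ᵐ[P] (QX + QZ) ∘ U := by
      filter_upwards [hXU, hZU] with ω hXω hZω
      rw [hXω, hZω, Function.comp_apply, Pi.add_apply]
    rw [hpushXZ, Measure.map_congr hXZ, ← AEMeasurable.map_map_of_aemeasurable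
      (hUlaw ▸ (hmeas hQX).add (hmeas hQZ)) hU.aemeasurable, hUlaw]
  have hQXZ_eq : QX + QZ =ᵐ[μ] QXZ := ae_eq_of_map_eq_of_ae_eq_gradient (hVX.add hVZ) hW
    (hdiff (hVX.add hVZ)) (hdiff hW) hμ2 (hQX2.add hQZ2) hQXZ2 hsum hQXZ hlaw
  calc ∫ u, ⟪QXZ u, φv u⟫ ∂μ = ∫ u, ⟪QX u, φv u⟫ + ⟪QZ u, φv u⟫ ∂μ := by
        refine integral_congr_ae ?_
        filter_upwards [hQXZ_eq] with u hu
        rw [← hu, Pi.add_apply, inner_add_left]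
    _ = ∫ u, ⟪QX u, φv u⟫ ∂μ + ∫ u, ⟪QZ u, φv u⟫ ∂μ :=
        integral_add (hQX2.integrable_inner hφ) (hQZ2.integrable_inner hφ)
end
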